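/- Let (X,F,μ) and (Y,G,ν) be probability spaces, F₀ ⊆ F a sub-σ-field generated by a countable measurable partition {A₀,A₁,A₂,…} of X together with all F-measurable subsets of A₀, where μ(A₀)=0. Let T be a probability measure on F₀⊗G with marginals μ|F₀ and ν. Then T extends to a probability measure P on F⊗G with marginals μ and ν; explicitly, P = Σᵢ μ(Aᵢ)·(μᵢ × νᵢ) where μᵢ(A) = μ(A|Aᵢ) and νᵢ(B) = T(X×B | Aᵢ×Y) for indices i with μ(Aᵢ) > 0 agrees with T on F₀⊗G and lies in Γ(μ,ν). -/
import Mathlib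


open MeasureTheory Filter Topology

noncomputable section

variable {X Y : Type*}

/-- `P` is a coupling of `μ` and `ν`: a probability measure on the product
σ-field with marginals `μ` and `ν`. -/
def IsCoupling [MeasurableSpace X] [MeasurableSpace Y]
    (μ : Measure X) (ν : Measure Y) (P : Measure (X × Y)) : Prop :=
  IsProbabilityMeasure P ∧ P.map Prod.fst = μ ∧ P.map Prod.snd = ν

/-- Values `∫ c dP` as `P` ranges over the couplings of `μ` and `ν`. -/
def primalSet [MeasurableSpace X] [MeasurableSpace Y]
    (μ : Measure X) (ν : Measure Y) (c : X × Y → ℝ) : Set ℝ :=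
  {r | ∃ P : Measure (X × Y), IsCoupling μ ν P ∧ r = ∫ z, c z ∂P}

/-- `α(c) = inf_{P ∈ Γ(μ,ν)} ∫ c dP`. -/
def alphaInf [MeasurableSpace X] [MeasurableSpace Y]
    (μ : Measure X) (ν : Measure Y) (c : X × Y → ℝ) : ℝ :=
  sInf (primalSet μ ν c)

/-- `α*(c) = sup_{P ∈ Γ(μ,ν)} ∫ c dP`. -/
def alphaSup [MeasurableSpace X] [MeasurableSpace Y]
    (μ : Measure X) (ν : Measure Y) (c : X × Y → ℝ) : ℝ :=
  sSup (primalSet μ ν c)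

/-- Values `μ(f) + ν(g)` with `f ∈ L¹(μ)`, `g ∈ L¹(ν)` and `f + g ≤ c` pointwise. -/
def dualLowerSet [MeasurableSpace X] [MeasurableSpace Y]
    (μ : Measure X) (ν : Measure Y) (c : X × Y → ℝ) : Set ℝ :=
  {r | ∃ (f : X → ℝ) (g : Y → ℝ), Integrable f μ ∧ Integrable g ν ∧
    (∀ x y, f x + g y ≤ c (x, y)) ∧ r = ∫ x, f x ∂μ + ∫ y, g y ∂ν}

/-- Values `μ(f) + ν(g)` with `f ∈ L¹(μ)`, `g ∈ L¹(ν)` and `f + g ≥ c` pointwise. -/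
def dualUpperSet [MeasurableSpace X] [MeasurableSpace Y]
    (μ : Measure X) (ν : Measure Y) (c : X × Y → ℝ) : Set ℝ :=
  {r | ∃ (f : X → ℝ) (g : Y → ℝ), Integrable f μ ∧ Integrable g ν ∧
    (∀ x y, c (x, y) ≤ f x + g y) ∧ r = ∫ x, f x ∂μ + ∫ y, g y ∂ν}

/-- `β(c) = sup {μ(f)+ν(g) : f + g ≤ c}`. -/
def betaSup [MeasurableSpace X] [MeasurableSpace Y]
    (μ : Measure X) (ν : Measure Y) (c : X × Y → ℝ) : ℝ :=
  sSup (dualLowerSet μ ν c)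

/-- `β*(c) = inf {μ(f)+ν(g) : f + g ≥ c}`. -/
def betaInf [MeasurableSpace X] [MeasurableSpace Y]
    (μ : Measure X) (ν : Measure Y) (c : X × Y → ℝ) : ℝ :=
  sInf (dualUpperSet μ ν c)

/-- Condition (1.1): `f₁ + g₁ ≤ c ≤ f₂ + g₂` with `f₁, f₂ ∈ L¹(μ)`, `g₁, g₂ ∈ L¹(ν)`. -/
def HasIntegrableBounds [MeasurableSpace X] [MeasurableSpace Y]
    (μ : Measure X) (ν : Measure Y) (c : X × Y → ℝ) : Prop :=
  ∃ (f₁ f₂ : X → ℝ) (g₁ g₂ : Y → ℝ), Integrable f₁ μ ∧ Integrable f₂ μ ∧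
    Integrable g₁ ν ∧ Integrable g₂ ν ∧
    ∀ x y, f₁ x + g₁ y ≤ c (x, y) ∧ c (x, y) ≤ f₂ x + g₂ y

/-- Real-valued indicator of a set. -/
def indR (H : Set (X × Y)) : X × Y → ℝ := H.indicator fun _ => (1 : ℝ)

/-- `R` is a finite union of measurable rectangles, i.e. an element of the ring
generated by the measurable rectangles. -/
def IsRectUnion [MeasurableSpace X] [MeasurableSpace Y] (R : Set (X × Y)) : Prop :=
  ∃ (n : ℕ) (A : Fin n → Set X) (B : Fin n → Set Y),
    (∀ i, MeasurableSet (A i)) ∧ (∀ i, MeasurableSet (B i)) ∧ R = ⋃ i, A i ×ˢ B i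

theorem stmt19 [mX : MeasurableSpace X] [mY : MeasurableSpace Y]
    (μ : Measure X) (ν : Measure Y) [IsProbabilityMeasure μ] [IsProbabilityMeasure ν]
    (A : ℕ → Set X) (hAmeas : ∀ i, MeasurableSet (A i))
    (hdisj : Pairwise (Function.onFun Disjoint A)) (hcov : (⋃ i, A i) = Set.univ)
    (hA0 : μ (A 0) = 0)
    (m0 : MeasurableSpace X)
    (hm0 : m0 = MeasurableSpace.generateFrom
      ({s | ∃ t : Set X, MeasurableSet t ∧ s = A 0 ∩ t} ∪ {s | ∃ i, 0 < i ∧ s = A i}))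
    (T : @Measure (X × Y) (m0.prod mY))
    (hTprob : @IsProbabilityMeasure (X × Y) (m0.prod mY) T)
    (hT1 : ∀ s : Set X, MeasurableSet[m0] s → T (s ×ˢ (Set.univ : Set Y)) = μ s)
    (hT2 : ∀ t : Set Y, MeasurableSet t → T ((Set.univ : Set X) ×ˢ t) = ν t) :
    ∃ P : @Measure (X × Y) (mX.prod mY), @IsCoupling X Y mX mY μ ν P ∧
      ∀ s : Set (X × Y), MeasurableSet[m0.prod mY] s → P s = T s := by
  classical
  -- the σ-algebra generated by the blocks A i, i ≥ 1
  set mb : MeasurableSpace X :=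
    MeasurableSpace.generateFrom {u : Set X | ∃ i, 0 < i ∧ u = A i} with hmb
  -- restore mX as the preferred instance
  letI : MeasurableSpace X := mX
  have hAm : ∀ i, MeasurableSet[m0] (A i) := by
    intro i
    rcases Nat.eq_zero_or_pos i with rfl | hi
    · rw [hm0]
      exact MeasurableSpace.measurableSet_generateFrom
        (Or.inl ⟨Set.univ, @MeasurableSet.univ X m0, (Set.inter_univ _).symm⟩)
    · rw [hm0]
      exact MeasurableSpace.measurableSet_generateFrom (Or.inr ⟨i, hi, rfl⟩)
  have hsndm : @Measurable (X × Y) Y (m0.prod mY) mY Prod.snd := @measurable_snd X Y m0 mY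
  -- conditional measures on Y
  set ν_ : ℕ → Measure Y := fun i =>
    (μ (A i))⁻¹ • @Measure.map _ _ (m0.prod mY) mY Prod.snd
      (T.restrict ((A i) ×ˢ (Set.univ : Set Y))) with hν_def
  have hνapp : ∀ i, ∀ t : Set Y, MeasurableSet t →
      ν_ i t = (μ (A i))⁻¹ * T ((A i) ×ˢ t) := by
    intro i t ht
    have h1 : (Prod.snd ⁻¹' t : Set (X × Y)) ∩ ((A i) ×ˢ (Set.univ : Set Y))
        = (A i) ×ˢ t := by
      ext z; simp [and_comm]
    rw [hν_def]
    simp only [Measure.smul_apply, smul_eq_mul]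
    rw [Measure.map_apply hsndm ht, Measure.restrict_apply (hsndm ht), h1]
  have hTrect_le : ∀ i, ∀ t : Set Y, T ((A i) ×ˢ t) ≤ μ (A i) := by
    intro i t
    calc T ((A i) ×ˢ t) ≤ T ((A i) ×ˢ (Set.univ : Set Y)) :=
          measure_mono (Set.prod_mono subset_rfl (Set.subset_univ t))
      _ = μ (A i) := hT1 (A i) (hAm i)
  have hkey : ∀ i, ∀ t : Set Y, MeasurableSet t →
      μ (A i) * ν_ i t = T ((A i) ×ˢ t) := by
    intro i t ht
    rcases eq_or_ne (μ (A i)) 0 with h0 | h0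
    · have h1 : T ((A i) ×ˢ t) = 0 := le_zero_iff.mp (h0 ▸ hTrect_le i t)
      rw [h0, zero_mul, h1]
    · rw [hνapp i t ht, ← mul_assoc, ENNReal.mul_inv_cancel h0 (measure_ne_top μ _), one_mul]
  have hν1 : ∀ i, μ (A i) ≠ 0 → ν_ i Set.univ = 1 := by
    intro i h0
    rw [hνapp i Set.univ MeasurableSet.univ, hT1 (A i) (hAm i),
      ENNReal.inv_mul_cancel h0 (measure_ne_top μ _)]
  have hνfin : ∀ i, IsFiniteMeasure (ν_ i) := by
    intro i
    constructor
    rcases eq_or_ne (μ (A i)) 0 with h0 | h0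
    · rw [hνapp i Set.univ MeasurableSet.univ]
      have h1 : T ((A i) ×ˢ (Set.univ : Set Y)) = 0 :=
        le_zero_iff.mp (h0 ▸ hTrect_le i Set.univ)
      rw [h1, mul_zero]
      exact ENNReal.zero_lt_top
    · rw [hν1 i h0]; exact ENNReal.one_lt_top
  -- the candidate extension
  set P : @Measure (X × Y) (mX.prod mY) :=
    Measure.sum (fun i => (μ.restrict (A i)).prod (ν_ i)) with hPdef
  have hPrect : ∀ s : Set X, ∀ t : Set Y, MeasurableSet s → MeasurableSet t →
      P (s ×ˢ t) = ∑' i, μ (s ∩ A i) * ν_ i t := by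
    intro s t hs ht
    rw [hPdef, Measure.sum_apply _ (hs.prod ht)]
    refine tsum_congr fun i => ?_
    haveI := hνfin i
    rw [Measure.prod_prod, Measure.restrict_apply hs]
  -- first marginal
  have hfst : P.map Prod.fst = μ := by
    ext s hs
    rw [Measure.map_apply measurable_fst hs]
    have h1 : (Prod.fst ⁻¹' s : Set (X × Y)) = s ×ˢ (Set.univ : Set Y) := by
      ext z; simp
    rw [h1, hPrect s Set.univ hs MeasurableSet.univ]
    have h2 : ∀ i, μ (s ∩ A i) * ν_ i Set.univ = μ (s ∩ A i) := by
      intro i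
      rcases eq_or_ne (μ (A i)) 0 with h0 | h0
      · have h3 : μ (s ∩ A i) = 0 :=
          le_zero_iff.mp (h0 ▸ measure_mono Set.inter_subset_right)
        rw [h3, zero_mul]
      · rw [hν1 i h0, mul_one]
    have hdisj' : Pairwise (Function.onFun Disjoint fun i => s ∩ A i) :=
      fun i j hij => Disjoint.mono Set.inter_subset_right Set.inter_subset_right (hdisj hij)
    rw [tsum_congr h2, ← measure_iUnion hdisj' (fun i => hs.inter (hAmeas i)),
      ← Set.inter_iUnion, hcov, Set.inter_univ]
  -- second marginal
  have hTsum : ∀ t : Set Y, MeasurableSet t →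
      (∑' i, T ((A i) ×ˢ t)) = T ((Set.univ : Set X) ×ˢ t) := by
    intro t ht
    rw [← measure_iUnion (fun i j hij => Set.Disjoint.set_prod_left (hdisj hij) _ _)
      (fun i => (hAm i).prod ht), ← Set.iUnion_prod_const, hcov]
  have hsnd : P.map Prod.snd = ν := by
    ext t ht
    rw [Measure.map_apply measurable_snd ht]
    have h1 : (Prod.snd ⁻¹' t : Set (X × Y)) = (Set.univ : Set X) ×ˢ t := by
      ext z; simp
    rw [h1, hPrect Set.univ t MeasurableSet.univ ht]
    have h2 : ∀ i, μ (Set.univ ∩ A i) * ν_ i t = T ((A i) ×ˢ t) := by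
      intro i; rw [Set.univ_inter]; exact hkey i t ht
    rw [tsum_congr h2, hTsum t ht, hT2 t ht]
  have hPuniv : P Set.univ = 1 := by
    have h1 : P.map Prod.snd Set.univ = ν Set.univ := by rw [hsnd]
    rw [Measure.map_apply measurable_snd MeasurableSet.univ, Set.preimage_univ] at h1
    rw [h1, measure_univ]
  haveI hPprob : IsProbabilityMeasure P := ⟨hPuniv⟩
  -- structure of m0-measurable sets
  have hstruct : ∀ s : Set X, MeasurableSet[m0] s →
      ∀ i, 0 < i → A i ⊆ s ∨ s ∩ A i = ∅ := by
    intro s hs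
    rw [hm0] at hs
    refine MeasurableSpace.generateFrom_induction _
      (fun s _ => ∀ i, 0 < i → A i ⊆ s ∨ s ∩ A i = ∅) ?_ ?_ ?_ ?_ s hs
    · rintro u (⟨t, ht, rfl⟩ | ⟨j, hj, rfl⟩) _ i hi
      · right
        have h3 : A 0 ∩ A i = ∅ :=
          Set.disjoint_iff_inter_eq_empty.mp (hdisj hi.ne)
        rw [Set.inter_comm (A 0) t, Set.inter_assoc, h3, Set.inter_empty]
      · rcases eq_or_ne i j with rfl | hij
        · left; exact subset_rfl
        · right
          exact Set.disjoint_iff_inter_eq_empty.mp (hdisj (Ne.symm hij))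
    · intro i _; right; exact Set.empty_inter _
    · intro u _ hu i hi
      rcases hu i hi with h | h
      · right
        exact Set.eq_empty_iff_forall_notMem.mpr fun x hx => hx.1 (h hx.2)
      · left
        intro x hx hxs
        exact (Set.eq_empty_iff_forall_notMem.mp h x) ⟨hxs, hx⟩
    · intro f _ hf i hi
      by_cases h : ∃ n, A i ⊆ f n
      · rcases h with ⟨n, hn⟩
        left
        exact hn.trans (Set.subset_iUnion f n)
      · right
        push_neg at h
        rw [Set.iUnion_inter]
        refine Set.iUnion_eq_empty.mpr fun n => ?_
        rcases hf n i hi with h' | h'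
        · exact absurd h' (h n)
        · exact h'
  -- facts about mb
  have hmbX : mb ≤ mX := by
    rw [hmb]
    apply MeasurableSpace.generateFrom_le
    rintro u ⟨i, hi, rfl⟩
    exact hAmeas i
  have hmb0 : mb ≤ m0 := by
    rw [hmb]
    apply MeasurableSpace.generateFrom_le
    rintro u ⟨i, hi, rfl⟩
    exact hAm i
  have hA0mb : MeasurableSet[mb] (A 0) := by
    have hc : (⋃ i, ⋃ (_ : 0 < i), A i)ᶜ = A 0 := by
      ext x
      simp only [Set.mem_compl_iff, Set.mem_iUnion, not_exists]
      constructor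
      · intro h
        have hx : x ∈ ⋃ i, A i := hcov ▸ Set.mem_univ x
        rcases Set.mem_iUnion.mp hx with ⟨j, hj⟩
        rcases Nat.eq_zero_or_pos j with rfl | hjpos
        · exact hj
        · exact absurd hj (h j hjpos)
      · intro h i hi hx
        exact Set.disjoint_left.mp (hdisj hi.ne') hx h
    rw [← hc]
    exact MeasurableSet.compl <| MeasurableSet.iUnion fun i =>
      MeasurableSet.iUnion fun hi =>
        MeasurableSpace.measurableSet_generateFrom ⟨i, hi, rfl⟩
  have h_sdiff : ∀ s : Set X, MeasurableSet[m0] s → MeasurableSet[mb] (s \ A 0) := by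
    intro s hs
    have heq : s \ A 0 = ⋃ i, ⋃ (_ : 0 < i ∧ A i ⊆ s), A i := by
      ext x
      simp only [Set.mem_diff, Set.mem_iUnion]
      constructor
      · rintro ⟨hxs, hx0⟩
        have hx : x ∈ ⋃ i, A i := hcov ▸ Set.mem_univ x
        rcases Set.mem_iUnion.mp hx with ⟨j, hj⟩
        have hjpos : 0 < j := Nat.pos_of_ne_zero (by rintro rfl; exact hx0 hj)
        rcases hstruct s hs j hjpos with h | h
        · exact ⟨j, ⟨hjpos, h⟩, hj⟩
        · exact absurd (h ▸ Set.mem_inter hxs hj) (Set.notMem_empty x)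
      · rintro ⟨i, ⟨hi, hsub⟩, hx⟩
        exact ⟨hsub hx, Set.disjoint_left.mp (hdisj hi.ne') hx⟩
    rw [heq]
    exact MeasurableSet.iUnion fun i => MeasurableSet.iUnion fun hi =>
      MeasurableSpace.measurableSet_generateFrom ⟨i, hi.1, rfl⟩
  -- P and T agree on m0-rectangles
  have hPT : ∀ s : Set X, ∀ t : Set Y, MeasurableSet[m0] s → MeasurableSet s →
      MeasurableSet t → P (s ×ˢ t) = T (s ×ˢ t) := by
    intro s t hs hsX ht
    have hdecomp : s ×ˢ t = ⋃ i, ((s ∩ A i) ×ˢ t) := by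
      rw [← Set.iUnion_prod_const, ← Set.inter_iUnion, hcov, Set.inter_univ]
    have hT' : T (s ×ˢ t) = ∑' i, T ((s ∩ A i) ×ˢ t) := by
      rw [hdecomp]
      exact measure_iUnion
        (fun i j hij => Set.Disjoint.set_prod_left
          (Disjoint.mono Set.inter_subset_right Set.inter_subset_right (hdisj hij)) t t)
        (fun i => ((hs.inter (hAm i)).prod ht))
    rw [hPrect s t hsX ht, hT']
    refine tsum_congr fun i => ?_
    rcases Nat.eq_zero_or_pos i with rfl | hi
    · have h0 : μ (s ∩ A 0) = 0 :=
        le_zero_iff.mp (hA0 ▸ measure_mono Set.inter_subset_right)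
      have h1 : T ((s ∩ A 0) ×ˢ t) = 0 := by
        refine le_zero_iff.mp ?_
        calc T ((s ∩ A 0) ×ˢ t) ≤ T ((s ∩ A 0) ×ˢ (Set.univ : Set Y)) :=
              measure_mono (Set.prod_mono subset_rfl (Set.subset_univ t))
          _ = μ (s ∩ A 0) := hT1 _ (hs.inter (hAm 0))
          _ ≤ 0 := h0.le
      rw [h0, zero_mul, h1]
    · rcases hstruct s hs i hi with h | h
      · rw [Set.inter_eq_right.mpr h]
        exact hkey i t ht
      · rw [h, Set.empty_prod, measure_empty, measure_empty, zero_mul]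
  -- generating presentations of the product σ-algebras
  have hgenb : mb.prod mY = MeasurableSpace.generateFrom
      (Set.image2 (· ×ˢ ·) { s : Set X | MeasurableSet[mb] s }
        { t : Set Y | MeasurableSet t }) := (@generateFrom_prod X Y mb mY).symm
  have hgen0 : m0.prod mY = MeasurableSpace.generateFrom
      (Set.image2 (· ×ˢ ·) { s : Set X | MeasurableSet[m0] s }
        { t : Set Y | MeasurableSet t }) := (@generateFrom_prod X Y m0 mY).symm
  have hbleX : mb.prod mY ≤ mX.prod mY := by
    rw [hgenb]
    apply MeasurableSpace.generateFrom_le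
    rintro u ⟨s, hs, t, ht, rfl⟩
    exact (hmbX s hs).prod ht
  have hble0 : mb.prod mY ≤ m0.prod mY := by
    rw [hgenb]
    apply MeasurableSpace.generateFrom_le
    rintro u ⟨s, hs, t, ht, rfl⟩
    exact @MeasurableSet.prod X Y m0 mY _ _ (hmb0 s hs) ht
  -- P and T agree on mb.prod mY
  have hPTb : ∀ w : Set (X × Y), MeasurableSet[mb.prod mY] w → P w = T w := by
    refine MeasurableSpace.induction_on_inter (m := mb.prod mY) hgenb
      (@isPiSystem_prod X Y mb mY) ?_ ?_ ?_ ?_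
    · simp
    · rintro u ⟨s, hs, t, ht, rfl⟩
      exact hPT s t (hmb0 s hs) (hmbX s hs) ht
    · intro u hu hPu
      have h1 : P uᶜ = P Set.univ - P u :=
        measure_compl (hbleX u hu) (measure_ne_top P u)
      have h2 : T uᶜ = T Set.univ - T u :=
        measure_compl (hble0 u hu) (measure_ne_top T u)
      rw [h1, h2, hPu, measure_univ, measure_univ]
    · intro f hfd hfm hPf
      rw [measure_iUnion hfd (fun i => hbleX _ (hfm i)),
        measure_iUnion hfd (fun i => hble0 _ (hfm i))]
      exact tsum_congr hPf
  -- every m0⊗mY-set agrees with an mb⊗mY-set off the null set A0 × Y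
  have hQ : ∀ w : Set (X × Y), MeasurableSet[m0.prod mY] w →
      MeasurableSet[mb.prod mY] (w \ ((A 0) ×ˢ (Set.univ : Set Y))) := by
    intro w hw
    rw [hgen0] at hw
    have hD : MeasurableSet[mb.prod mY] ((A 0) ×ˢ (Set.univ : Set Y)) :=
      @MeasurableSet.prod X Y mb mY _ _ hA0mb MeasurableSet.univ
    refine MeasurableSpace.generateFrom_induction _
      (fun w _ => MeasurableSet[mb.prod mY] (w \ ((A 0) ×ˢ (Set.univ : Set Y))))
      ?_ ?_ ?_ ?_ w hw
    · rintro u ⟨s, hs, t, ht, rfl⟩ _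
      have heq : (s ×ˢ t) \ ((A 0) ×ˢ (Set.univ : Set Y)) = (s \ A 0) ×ˢ t := by
        ext z
        simp only [Set.mem_diff, Set.mem_prod, Set.mem_univ, and_true]
        tauto
      rw [heq]
      exact @MeasurableSet.prod X Y mb mY _ _ (h_sdiff s hs) ht
    · simp only [Set.empty_diff]
      exact @MeasurableSet.empty (X × Y) (mb.prod mY)
    · intro u _ hu
      have heq : uᶜ \ ((A 0) ×ˢ (Set.univ : Set Y)) =
          ((u \ ((A 0) ×ˢ (Set.univ : Set Y))) ∪ ((A 0) ×ˢ (Set.univ : Set Y)))ᶜ := by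
        ext z
        simp only [Set.mem_diff, Set.mem_compl_iff, Set.mem_union]
        tauto
      rw [heq]
      exact (hu.union hD).compl
    · intro f _ hf
      rw [Set.iUnion_diff]
      exact MeasurableSet.iUnion hf
  -- the null rectangle
  have hPD : P ((A 0) ×ˢ (Set.univ : Set Y)) = 0 := by
    have h1 : (Prod.fst ⁻¹' (A 0) : Set (X × Y)) = (A 0) ×ˢ (Set.univ : Set Y) := by
      ext z; simp
    rw [← h1, ← Measure.map_apply measurable_fst (hAmeas 0), hfst, hA0]
  have hTD : T ((A 0) ×ˢ (Set.univ : Set Y)) = 0 := by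
    rw [hT1 (A 0) (hAm 0), hA0]
  -- conclusion
  refine ⟨P, ⟨hPprob, hfst, hsnd⟩, ?_⟩
  intro w hw
  have hPb := hPTb _ (hQ w hw)
  have hsub1 : w ⊆ (w \ ((A 0) ×ˢ (Set.univ : Set Y))) ∪ ((A 0) ×ˢ (Set.univ : Set Y)) :=
    fun z hz => by by_cases h : z ∈ (A 0) ×ˢ (Set.univ : Set Y) <;> simp [hz, h]
  have hsub2 : w \ ((A 0) ×ˢ (Set.univ : Set Y)) ⊆ w := Set.diff_subset
  refine le_antisymm ?_ ?_
  · calc P w ≤ P (w \ ((A 0) ×ˢ (Set.univ : Set Y))) + P ((A 0) ×ˢ (Set.univ : Set Y)) :=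
          (measure_mono hsub1).trans (measure_union_le _ _)
      _ = T (w \ ((A 0) ×ˢ (Set.univ : Set Y))) := by rw [hPb, hPD, add_zero]
      _ ≤ T w := measure_mono hsub2
  · calc T w ≤ T (w \ ((A 0) ×ˢ (Set.univ : Set Y))) + T ((A 0) ×ˢ (Set.univ : Set Y)) :=
          (measure_mono hsub1).trans (measure_union_le _ _)
      _ = P (w \ ((A 0) ×ˢ (Set.univ : Set Y))) := by rw [← hPb, hTD, add_zero]
      _ ≤ P w := measure_mono hsub2
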